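/- arXiv:1802.03485 — 2 statements merged into one kernel-verified Lean document; each statement's English description precedes it below -/
import Mathlib

section
/- Let 0 < p < 1, q = 1 − p, let μ_n be binomially distributed with parameters n and p, and let (m_n) be a sequence of integers with 0 ≤ m_n ≤ n such that (m_n − np)/√(npq) → x for some fixed real x as n → ∞. Then √(2πnpq) · P(μ_n = m_n) → exp(−x²/2) as n → ∞. -/
/-!
Write `n! = s n * √(2n) * (n/e)ⁿ`, where Stirling's sequence satisfies `s n → √π`.
For `0 < k < n`, with `a = np/k` and `b = nq/(n-k)`,
`√(2πnpq) C(n,k) pᵏ qⁿ⁻ᵏ = s n / (s k * s (n-k)) * √(π a b) * aᵏ bⁿ⁻ᵏ`.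
Along `k = mₙ` the first factor tends to `1/√π` and the second to `√π`.
Writing `k = np(1+u)` and `n-k = nq(1+w)`, the last factor is `exp (-(np h(u) + nq h(w)))`
with `h(y) = (1+y) log(1+y) - y`, because `np u + nq w = 0`. Since `h(y) = y²/2 + O(y³)`,
`np u² = q t²` and `nq w² = p t²` with `t = (k-np)/√(npq) → x`, the exponent tends to
`-(q+p) x²/2 = -x²/2`.
-/

open Filter Topology Real Stirling

/-- The function `h` of Bennett's inequality. -/
noncomputable def bennett (y : ℝ) : ℝ := (1 + y) * log (1 + y) - y

lemma abs_log_one_add_sub_le {y : ℝ} (hy : |y| ≤ 1 / 2) :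
    |log (1 + y) - y + y ^ 2 / 2| ≤ 2 * |y| ^ 3 := by
  have H := abs_log_sub_add_sum_range_le (x := -y) (by rw [abs_neg]; linarith) 2
  norm_num [Finset.sum_range_succ] at H
  calc |log (1 + y) - y + y ^ 2 / 2| = |-y + y ^ 2 / 2 + log (1 + y)| := by ring_nf
    _ ≤ |y| ^ 3 / (1 - |y|) := H
    _ ≤ 2 * |y| ^ 3 := by
      rw [div_le_iff₀ (by linarith)]
      nlinarith [pow_nonneg (abs_nonneg y) 3]

lemma abs_bennett_sub_le {y : ℝ} (hy : |y| ≤ 1 / 2) :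
    |bennett y - y ^ 2 / 2| ≤ 4 * |y| ^ 3 := by
  have h1 : |1 + y| ≤ 3 / 2 := by
    rw [abs_le] at hy ⊢; constructor <;> linarith
  calc |bennett y - y ^ 2 / 2| = |(1 + y) * (log (1 + y) - y + y ^ 2 / 2) - y ^ 3 / 2| := by
        rw [bennett]; ring_nf
    _ ≤ |1 + y| * |log (1 + y) - y + y ^ 2 / 2| + |y| ^ 3 / 2 := by
        grw [abs_sub, abs_mul, abs_div, abs_pow, abs_two]
    _ ≤ 3 / 2 * (2 * |y| ^ 3) + |y| ^ 3 / 2 := by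
        gcongr
        exact abs_log_one_add_sub_le hy
    _ ≤ 4 * |y| ^ 3 := by nlinarith [pow_nonneg (abs_nonneg y) 3]

lemma Filter.Tendsto.mul_bennett {α : Type*} {l : Filter α} {N y : α → ℝ} {c : ℝ}
    (hy : Tendsto y l (𝓝 0)) (hNy : Tendsto (fun i => N i * y i ^ 2) l (𝓝 c)) :
    Tendsto (fun i => N i * bennett (y i)) l (𝓝 (c / 2)) := by
  have hsmall : ∀ᶠ i in l, |y i| ≤ 1 / 2 := by
    simpa using hy.abs.eventually (eventually_le_nhds (by norm_num : |(0 : ℝ)| < 1 / 2))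
  have herr : Tendsto (fun i => N i * bennett (y i) - N i * y i ^ 2 / 2) l (𝓝 0) := by
    refine squeeze_zero_norm' (a := fun i => 4 * (|N i * y i ^ 2| * |y i|)) ?_
      (by simpa using (hNy.abs.mul hy.abs).const_mul 4)
    filter_upwards [hsmall] with i hi
    calc ‖N i * bennett (y i) - N i * y i ^ 2 / 2‖ = |N i| * |bennett (y i) - y i ^ 2 / 2| := by
          rw [Real.norm_eq_abs, ← abs_mul]; ring_nf
      _ ≤ |N i| * (4 * |y i| ^ 3) := by gcongr; exact abs_bennett_sub_le hi
      _ = 4 * (|N i * y i ^ 2| * |y i|) := by rw [abs_mul, abs_pow]; ring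
  simpa using herr.add (hNy.div_const 2)

lemma div_pow_eq_exp_bennett {N : ℝ} (hN : 0 < N) {k : ℕ} (hk : 0 < k) :
    (N / k) ^ k = exp (-(N * bennett (k / N - 1)) - (k - N)) := by
  have hk' : (0 : ℝ) < k := by exact_mod_cast hk
  have : -(N * bennett (k / N - 1)) - (k - N) = k * log (N / k) := by
    rw [bennett, add_sub_cancel, ← inv_div, log_inv]
    field_simp
    ring
  rw [this, exp_nat_mul, exp_log (by positivity)]

lemma div_mul_sub_one_eq_mul_sqrt {p q : ℝ} (hp : 0 < p) (hq : 0 < q) (k : ℝ) {n : ℕ}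
    (hn : n ≠ 0) :
    k / (n * p) - 1 = (k - n * p) / √(n * p * q) * √(q / p / n) := by
  have hn' : (0 : ℝ) < n := by positivity
  have hsqrt : √(n * p * q) = n * p * √(q / p / n) := by
    rw [show (n : ℝ) * p * q = (n * p) ^ 2 * (q / p / n) by field_simp, sqrt_mul (sq_nonneg _),
      sqrt_sq (by positivity)]
  have : 0 < √(q / p / n) := by positivity
  rw [hsqrt]
  field_simp

section Deviation

variable {p q x : ℝ} {k : ℕ → ℕ} (hp : 0 < p) (hq : 0 < q)
  (hk : Tendsto (fun n : ℕ => ((k n : ℝ) - n * p) / √(n * p * q)) atTop (𝓝 x))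
include hp hq hk

lemma tendsto_div_mul_sub_one_of_deviation :
    Tendsto (fun n : ℕ => (k n : ℝ) / (n * p) - 1) atTop (𝓝 0) := by
  have hsqrt : Tendsto (fun n : ℕ => √(q / p / n)) atTop (𝓝 0) := by
    simpa using (tendsto_const_div_atTop_nhds_zero_nat (q / p)).sqrt
  have hprod := hk.mul hsqrt
  rw [mul_zero] at hprod
  refine hprod.congr' ?_
  filter_upwards [eventually_ne_atTop 0] with n hn
  exact (div_mul_sub_one_eq_mul_sqrt hp hq _ hn).symm

lemma tendsto_mul_bennett_of_deviation :
    Tendsto (fun n : ℕ => n * p * bennett ((k n : ℝ) / (n * p) - 1)) atTop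
      (𝓝 (q * x ^ 2 / 2)) := by
  refine (tendsto_div_mul_sub_one_of_deviation hp hq hk).mul_bennett
    (((hk.pow 2).const_mul q).congr' ?_)
  filter_upwards [eventually_ne_atTop 0] with n hn
  have hn' : (0 : ℝ) < n := by positivity
  rw [div_mul_sub_one_eq_mul_sqrt hp hq _ hn, mul_pow, sq_sqrt (by positivity)]
  field_simp

lemma tendsto_atTop_of_deviation : Tendsto k atTop atTop := by
  have hnp : Tendsto (fun n : ℕ => (n : ℝ) * p) atTop atTop :=
    tendsto_natCast_atTop_atTop.atTop_mul_const hp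
  have hratio := (tendsto_div_mul_sub_one_of_deviation hp hq hk).add_const 1
  rw [zero_add] at hratio
  rw [← tendsto_natCast_atTop_iff (R := ℝ)]
  refine (hnp.atTop_mul_pos one_pos hratio).congr' ?_
  filter_upwards [eventually_ne_atTop 0] with n hn
  have hn' : (0 : ℝ) < n := by positivity
  field_simp
  ring

lemma tendsto_mul_div_of_deviation : Tendsto (fun n : ℕ => n * p / k n) atTop (𝓝 1) := by
  have hratio := ((tendsto_div_mul_sub_one_of_deviation hp hq hk).add_const 1).inv₀ (by norm_num)
  simpa only [zero_add, inv_one, sub_add_cancel, inv_div] using hratio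

end Deviation

lemma Stirling.stirlingSeq_pos {n : ℕ} (hn : n ≠ 0) : 0 < stirlingSeq n := by
  obtain ⟨i, rfl⟩ := Nat.exists_eq_succ_of_ne_zero hn
  exact stirlingSeq'_pos i

lemma factorial_eq_stirlingSeq_mul {n : ℕ} (hn : n ≠ 0) :
    (n.factorial : ℝ) = stirlingSeq n * (√(2 * n) * (n / exp 1) ^ n) := by
  have : 0 < √(2 * n) * (n / exp 1) ^ n := by positivity
  rw [stirlingSeq, div_mul_cancel₀ _ this.ne']

lemma sqrt_mul_choose_mul_pow_eq {p q : ℝ} (hp : 0 ≤ p) (hq : 0 ≤ q) {n k : ℕ} (hk : 0 < k)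
    (hkn : k < n) :
    √(2 * π * n * p * q) * ((n.choose k : ℝ) * p ^ k * q ^ (n - k)) =
      stirlingSeq n / (stirlingSeq k * stirlingSeq (n - k)) *
        √(π * (n * p / k) * (n * q / (n - k : ℕ))) *
        ((n * p / k) ^ k * (n * q / (n - k : ℕ)) ^ (n - k)) := by
  obtain ⟨l, rfl⟩ := Nat.exists_eq_add_of_le hkn.le
  have hl : 0 < l := by omega
  have hsqrt : √(2 * π * (k + l : ℕ) * p * q) * √(2 * (k + l : ℕ)) =
      √(π * ((k + l : ℕ) * p / k) * ((k + l : ℕ) * q / l)) * (√(2 * k) * √(2 * l)) := by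
    rw [← sqrt_mul (by positivity), ← sqrt_mul (by positivity), ← sqrt_mul (by positivity)]
    congr 1
    field_simp
  have hpow : ((k + l : ℕ) / exp 1) ^ (k + l) * (p ^ k * q ^ l) =
      (((k + l : ℕ) * p / k) ^ k * ((k + l : ℕ) * q / l) ^ l) *
        ((k / exp 1) ^ k * (l / exp 1) ^ l) := by
    simp only [div_pow, mul_pow, pow_add]
    field_simp
  have hk' := stirlingSeq_pos hk.ne'
  have hl' := stirlingSeq_pos hl.ne'
  calc _ = stirlingSeq (k + l) / (stirlingSeq k * stirlingSeq l) *
        (√(2 * π * (k + l : ℕ) * p * q) * √(2 * (k + l : ℕ)) / (√(2 * k) * √(2 * l))) *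
        (((k + l : ℕ) / exp 1) ^ (k + l) * (p ^ k * q ^ l) /
          ((k / exp 1) ^ k * (l / exp 1) ^ l)) := by
        rw [Nat.cast_choose ℝ (Nat.le_add_right k l), Nat.add_sub_cancel_left,
          factorial_eq_stirlingSeq_mul (by omega), factorial_eq_stirlingSeq_mul hk.ne',
          factorial_eq_stirlingSeq_mul hl.ne']
        ring
    _ = _ := by
        rw [hsqrt, hpow, Nat.add_sub_cancel_left]
        field_simp

section Binomial

variable {p x : ℝ} {m : ℕ → ℕ} (hm : ∀ n, m n ≤ n)
  (hx : Tendsto (fun n : ℕ => ((m n : ℝ) - n * p) / √(n * p * (1 - p))) atTop (𝓝 x))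
include hm hx

lemma tendsto_sub_deviation :
    Tendsto (fun n : ℕ => (((n - m n : ℕ) : ℝ) - n * (1 - p)) / √(n * (1 - p) * p)) atTop
      (𝓝 (-x)) := by
  refine hx.neg.congr fun n => ?_
  rw [Nat.cast_sub (hm n), mul_right_comm (n : ℝ) (1 - p) p, ← neg_div]
  ring_nf

lemma tendsto_div_pow_mul_div_pow_of_deviation (hp0 : 0 < p) (hp1 : p < 1) :
    Tendsto (fun n : ℕ => (n * p / m n) ^ m n * (n * (1 - p) / (n - m n : ℕ)) ^ (n - m n)) atTop
      (𝓝 (exp (-x ^ 2 / 2))) := by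
  have hq : 0 < 1 - p := sub_pos.mpr hp1
  have hx' := tendsto_sub_deviation hm hx
  have hsum := ((tendsto_mul_bennett_of_deviation hp0 hq hx).add
    (tendsto_mul_bennett_of_deviation hq hp0 hx')).neg.rexp
  rw [show -((1 - p) * x ^ 2 / 2 + p * (-x) ^ 2 / 2) = -x ^ 2 / 2 by ring] at hsum
  refine hsum.congr' ?_
  filter_upwards [(tendsto_atTop_of_deviation hp0 hq hx).eventually_gt_atTop 0,
    (tendsto_atTop_of_deviation hq hp0 hx').eventually_gt_atTop 0] with n hmn hln
  have hn : (0 : ℝ) < n := by norm_cast; omega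
  rw [div_pow_eq_exp_bennett (by positivity) hmn, div_pow_eq_exp_bennett (by positivity) hln,
    ← exp_add, Nat.cast_sub (hm n)]
  ring_nf

end Binomial

/-- **The local De Moivre–Laplace limit theorem**: let `0 < p < 1`, `q = 1 - p`, let
`μₙ` be binomially distributed with parameters `n` and `p`
(`P(μₙ = k) = C(n,k) pᵏ qⁿ⁻ᵏ`), and let `(mₙ)` be a sequence of integers with
`0 ≤ mₙ ≤ n` such that `(mₙ − np)/√(npq) → x` for a fixed real `x`. Then
`√(2πnpq) · P(μₙ = mₙ) → exp(−x²/2)` as `n → ∞`. -/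
theorem deMoivre_laplace_local_limit_theorem
    (p : ℝ) (hp0 : 0 < p) (hp1 : p < 1)
    (m : ℕ → ℕ) (hm : ∀ n, m n ≤ n) (x : ℝ)
    (hx : Tendsto (fun n : ℕ => ((m n : ℝ) - n * p) / Real.sqrt (n * p * (1 - p)))
      atTop (nhds x)) :
    Tendsto
      (fun n : ℕ => Real.sqrt (2 * Real.pi * n * p * (1 - p)) *
        ((n.choose (m n) : ℝ) * p ^ (m n) * (1 - p) ^ (n - m n)))
      atTop (nhds (Real.exp (-x ^ 2 / 2))) := by
  have hq : 0 < 1 - p := sub_pos.mpr hp1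
  have hx' := tendsto_sub_deviation hm hx
  have hm_top := tendsto_atTop_of_deviation hp0 hq hx
  have hl_top := tendsto_atTop_of_deviation hq hp0 hx'
  have hstirling := tendsto_stirlingSeq_sqrt_pi.div
    ((tendsto_stirlingSeq_sqrt_pi.comp hm_top).mul (tendsto_stirlingSeq_sqrt_pi.comp hl_top))
    (by positivity)
  have hsqrt :
      Tendsto (fun n : ℕ => √(π * (n * p / m n) * (n * (1 - p) / (n - m n : ℕ)))) atTop (𝓝 √π) := by
    simpa using (((tendsto_mul_div_of_deviation hp0 hq hx).const_mul π).mul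
      (tendsto_mul_div_of_deviation hq hp0 hx')).sqrt
  have hlim :=
    (hstirling.mul hsqrt).mul (tendsto_div_pow_mul_div_pow_of_deviation hm hx hp0 hp1)
  rw [show √π / (√π * √π) * √π * exp (-x ^ 2 / 2) = exp (-x ^ 2 / 2) by field_simp] at hlim
  refine hlim.congr' ?_
  filter_upwards [hm_top.eventually_gt_atTop 0, hl_top.eventually_gt_atTop 0] with n hmn hln
  exact (sqrt_mul_choose_mul_pow_eq hp0.le hq.le hmn (by omega)).symm
end

section
/- Let P be a k×k row-stochastic real matrix (all entries nonnegative and every row summing to 1), and suppose there exists a positive integer s such that every entry of P^s is strictly positive. Then there exists a probability vector π = (π_1, …, π_k) (nonnegative entries summing to 1) such that for all indices i, j, the (i,j) entry of P^n converges to π_j as n → ∞; in particular the limiting probabilities exist and do not depend on the initial state i. -/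
open Filter Finset

lemma pow_stoch_nonneg {k : ℕ} (P : Matrix (Fin k) (Fin k) ℝ)
    (hnonneg : ∀ i j, 0 ≤ P i j) : ∀ n i j, 0 ≤ (P ^ n) i j := by
  intro n
  induction n with
  | zero => intro i j; simp [Matrix.one_apply]; split <;> norm_num
  | succ n ih =>
    intro i j
    rw [pow_succ, Matrix.mul_apply]
    exact Finset.sum_nonneg fun l _ => mul_nonneg (ih i l) (hnonneg l j)

lemma pow_stoch_row {k : ℕ} (P : Matrix (Fin k) (Fin k) ℝ)
    (hrow : ∀ i, ∑ j, P i j = 1) : ∀ n i, ∑ j, (P ^ n) i j = 1 := by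
  intro n
  induction n with
  | zero => intro i; simp [Matrix.one_apply]
  | succ n ih =>
    intro i
    rw [pow_succ]
    simp only [Matrix.mul_apply]
    rw [Finset.sum_comm]
    calc (∑ l, ∑ j, (P ^ n) i l * P l j) = ∑ l, (P ^ n) i l * ∑ j, P l j := by
          simp [Finset.mul_sum]
      _ = 1 := by simp [hrow, ih i]

lemma osc_contract {k : ℕ} (hne : (univ : Finset (Fin k)).Nonempty)
    (Q : Matrix (Fin k) (Fin k) ℝ) (δ : ℝ)
    (hδ : ∀ i j, δ ≤ Q i j) (hrow : ∀ i, ∑ j, Q i j = 1) (x : Fin k → ℝ) :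
    univ.sup' hne (fun i => ∑ j, Q i j * x j) - univ.inf' hne (fun i => ∑ j, Q i j * x j)
      ≤ (1 - k * δ) * (univ.sup' hne x - univ.inf' hne x) := by
  obtain ⟨i, _, hi⟩ := exists_mem_eq_sup' hne (fun i => ∑ j, Q i j * x j)
  obtain ⟨l, _, hl⟩ := exists_mem_eq_inf' hne (fun i => ∑ j, Q i j * x j)
  rw [hi, hl]
  set M := univ.sup' hne x with hM
  set m := univ.inf' hne x with hm
  obtain ⟨w, _⟩ := hne
  have hMm : m ≤ M := le_trans (inf'_le x (mem_univ w)) (le_sup' x (mem_univ w))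
  have key : ∑ j, Q i j * x j - ∑ j, Q l j * x j
      = ∑ j, (Q i j - Q l j) * x j := by
    rw [← Finset.sum_sub_distrib]; congr 1; ext j; ring
  rw [key]
  have step1 : ∀ j, (Q i j - Q l j) * x j ≤ max (Q i j - Q l j) 0 * M + min (Q i j - Q l j) 0 * m := by
    intro j
    have hxM : x j ≤ M := le_sup' x (mem_univ j)
    have hxm : m ≤ x j := inf'_le x (mem_univ j)
    rcases le_total (Q l j) (Q i j) with h | h
    · have hc : (0:ℝ) ≤ Q i j - Q l j := by linarith
      rw [max_eq_left hc, min_eq_right hc]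
      nlinarith
    · have hc : Q i j - Q l j ≤ 0 := by linarith
      rw [max_eq_right hc, min_eq_left hc]
      nlinarith
  have hsum0 : ∑ j, (Q i j - Q l j) = 0 := by
    rw [Finset.sum_sub_distrib, hrow, hrow]; ring
  set S := ∑ j, max (Q i j - Q l j) 0 with hS
  have hSm : ∑ j, min (Q i j - Q l j) 0 = -S := by
    have h2 : S + ∑ j, min (Q i j - Q l j) 0 = ∑ j, (Q i j - Q l j) := by
      rw [hS, ← Finset.sum_add_distrib]
      exact Finset.sum_congr rfl fun j _ => by rw [max_add_min]; ring
    rw [hsum0] at h2; linarith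
  have hbound : ∑ j, (Q i j - Q l j) * x j ≤ S * (M - m) := by
    calc ∑ j, (Q i j - Q l j) * x j
        ≤ ∑ j, (max (Q i j - Q l j) 0 * M + min (Q i j - Q l j) 0 * m) :=
          Finset.sum_le_sum fun j _ => step1 j
      _ = S * M + (∑ j, min (Q i j - Q l j) 0) * m := by
          rw [Finset.sum_add_distrib, ← Finset.sum_mul, ← Finset.sum_mul]
      _ = S * (M - m) := by rw [hSm]; ring
  have hSle : S ≤ 1 - k * δ := by
    have : ∀ j, max (Q i j - Q l j) 0 ≤ Q i j - δ := by
      intro j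
      apply max_le
      · have := hδ l j; linarith
      · have := hδ i j; linarith
    calc S ≤ ∑ j : Fin k, (Q i j - δ) := Finset.sum_le_sum fun j _ => this j
      _ = 1 - k * δ := by
          rw [Finset.sum_sub_distrib, hrow]; simp [mul_comm]
  calc ∑ j, (Q i j - Q l j) * x j ≤ S * (M - m) := hbound
    _ ≤ (1 - k * δ) * (M - m) := by
        apply mul_le_mul_of_nonneg_right hSle; linarith

/-- **Markov's ergodic theorem for finite homogeneous chains**: let `P` be a `k×k`
row-stochastic matrix (nonnegative entries, each row summing to `1`) — the
transition matrix of a homogeneous Markov chain with `k` states — and suppose some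
power `P^s` (`s ≥ 1`) has all entries strictly positive. Then there is a probability
vector `π` such that for all states `i, j` the `n`-step transition probability
`(P^n) i j` converges to `π j` as `n → ∞`; in particular the limiting probabilities
exist and do not depend on the initial state `i`. -/
theorem markov_chain_ergodic_theorem (k : ℕ) (hk : 1 ≤ k)
    (P : Matrix (Fin k) (Fin k) ℝ)
    (hnonneg : ∀ i j, 0 ≤ P i j) (hrow : ∀ i, ∑ j, P i j = 1)
    (s : ℕ) (hs : 1 ≤ s) (hpos : ∀ i j, 0 < (P ^ s) i j) :
    ∃ π : Fin k → ℝ, (∀ j, 0 ≤ π j) ∧ (∑ j, π j = 1) ∧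
      ∀ i j, Tendsto (fun n : ℕ => (P ^ n) i j) atTop (nhds (π j)) := by
  have i0 : Fin k := ⟨0, hk⟩
  have hne : (univ : Finset (Fin k)).Nonempty := ⟨i0, mem_univ i0⟩
  have hn : ∀ n i j, 0 ≤ (P ^ n) i j := pow_stoch_nonneg P hnonneg
  have hr : ∀ n i, ∑ j, (P ^ n) i j = 1 := pow_stoch_row P hrow
  -- the Doeblin constant
  set δ : ℝ := univ.inf' hne fun i => univ.inf' hne fun j => (P ^ s) i j with hδ
  have hδpos : 0 < δ := by
    rw [hδ, Finset.lt_inf'_iff]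
    intro i _
    rw [Finset.lt_inf'_iff]
    exact fun j _ => hpos i j
  have hδle : ∀ i j, δ ≤ (P ^ s) i j := fun i j =>
    le_trans (inf'_le _ (mem_univ i)) (inf'_le _ (mem_univ j))
  set c : ℝ := 1 - k * δ with hc
  have hc1 : c < 1 := by
    have : (0:ℝ) < k * δ := by
      apply mul_pos _ hδpos
      exact_mod_cast Nat.lt_of_lt_of_le Nat.zero_lt_one hk
    rw [hc]; linarith
  have hc0 : 0 ≤ c := by
    have h1 : (k : ℝ) * δ = ∑ _j : Fin k, δ := by simp [mul_comm]
    have h2 : ∑ _j : Fin k, δ ≤ ∑ j, (P ^ s) i0 j :=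
      Finset.sum_le_sum fun j _ => hδle i0 j
    rw [hr s i0] at h2
    rw [hc]; linarith
  -- column max/min sequences
  set F : Fin k → ℕ → ℝ := fun j n => univ.sup' hne fun i => (P ^ n) i j with hF
  set G : Fin k → ℕ → ℝ := fun j n => univ.inf' hne fun i => (P ^ n) i j with hG
  have hGF : ∀ j n, G j n ≤ F j n := by
    intro j n
    exact le_trans (inf'_le (fun i => (P ^ n) i j) (mem_univ i0))
      (le_sup' (fun i => (P ^ n) i j) (mem_univ i0))
  have hGle : ∀ j n i, G j n ≤ (P ^ n) i j := by
    intro j n i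
    simp only [hG]
    exact inf'_le (fun i => (P ^ n) i j) (mem_univ i)
  have hleF : ∀ j n i, (P ^ n) i j ≤ F j n := by
    intro j n i
    simp only [hF]
    exact le_sup' (fun i => (P ^ n) i j) (mem_univ i)
  have hentry : ∀ (m n : ℕ) i j, (P ^ (m + n)) i j = ∑ l, (P ^ m) i l * (P ^ n) l j := by
    intro m n i j; rw [pow_add, Matrix.mul_apply]
  have hFanti : ∀ j, Antitone (F j) := by
    intro j
    apply antitone_nat_of_succ_le
    intro n
    apply Finset.sup'_le
    intro i _
    have : (P ^ (n + 1)) i j = ∑ l, P i l * (P ^ n) l j := by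
      have := hentry 1 n i j
      rw [show 1 + n = n + 1 by ring] at this
      simpa using this
    rw [this]
    calc ∑ l, P i l * (P ^ n) l j ≤ ∑ l, P i l * F j n :=
          Finset.sum_le_sum fun l _ =>
            mul_le_mul_of_nonneg_left (hleF j n l) (hnonneg i l)
      _ = F j n := by rw [← Finset.sum_mul, hrow i, one_mul]
  have hGmono : ∀ j, Monotone (G j) := by
    intro j
    apply monotone_nat_of_le_succ
    intro n
    apply Finset.le_inf'
    intro i _
    have : (P ^ (n + 1)) i j = ∑ l, P i l * (P ^ n) l j := by
      have := hentry 1 n i j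
      rw [show 1 + n = n + 1 by ring] at this
      simpa using this
    rw [this]
    calc G j n = ∑ l, P i l * G j n := by rw [← Finset.sum_mul, hrow i, one_mul]
      _ ≤ ∑ l, P i l * (P ^ n) l j :=
          Finset.sum_le_sum fun l _ =>
            mul_le_mul_of_nonneg_left (hGle j n l) (hnonneg i l)
  -- gap contraction
  have hgap : ∀ j n, F j (s + n) - G j (s + n) ≤ c * (F j n - G j n) := by
    intro j n
    have hfun : (fun i => (P ^ (s + n)) i j) = fun i => ∑ l, (P ^ s) i l * (P ^ n) l j :=
      funext fun i => hentry s n i j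
    have := osc_contract hne (P ^ s) δ hδle (hr s) (fun l => (P ^ n) l j)
    calc F j (s + n) - G j (s + n)
        = univ.sup' hne (fun i => ∑ l, (P ^ s) i l * (P ^ n) l j)
          - univ.inf' hne (fun i => ∑ l, (P ^ s) i l * (P ^ n) l j) := by
          rw [hF, hG]; simp only [hfun]
      _ ≤ c * (F j n - G j n) := this
  -- geometric decay along multiples of s
  have hdecay : ∀ j m, F j (m * s) - G j (m * s) ≤ c ^ m * (F j 0 - G j 0) := by
    intro j m
    induction m with
    | zero => simp
    | succ m ih =>
      have h1 : (m + 1) * s = s + m * s := by ring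
      calc F j ((m + 1) * s) - G j ((m + 1) * s)
          = F j (s + m * s) - G j (s + m * s) := by rw [h1]
        _ ≤ c * (F j (m * s) - G j (m * s)) := hgap j (m * s)
        _ ≤ c * (c ^ m * (F j 0 - G j 0)) := mul_le_mul_of_nonneg_left ih hc0
        _ = c ^ (m + 1) * (F j 0 - G j 0) := by ring
  -- F j converges
  have hFbdd : ∀ j, BddBelow (Set.range (F j)) :=
    fun j => ⟨G j 0, by rintro _ ⟨n, rfl⟩; exact le_trans (hGmono j (Nat.zero_le n)) (hGF j n)⟩
  have hFtend : ∀ j, Tendsto (F j) atTop (nhds (⨅ n, F j n)) :=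
    fun j => tendsto_atTop_ciInf (hFanti j) (hFbdd j)
  set π : Fin k → ℝ := fun j => ⨅ n, F j n with hπ
  -- the gap tends to 0
  have hDtend : ∀ j, Tendsto (fun n => F j n - G j n) atTop (nhds 0) := by
    intro j
    set D : ℕ → ℝ := fun n => F j n - G j n with hD
    have hDanti : Antitone D := fun a b hab => by
      have := hFanti j hab
      have := hGmono j hab
      simp only [hD]; linarith
    have hDnn : ∀ n, 0 ≤ D n := fun n => by simp only [hD]; linarith [hGF j n]
    have hDbdd : BddBelow (Set.range D) := ⟨0, by rintro _ ⟨n, rfl⟩; exact hDnn n⟩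
    have hL : Tendsto D atTop (nhds (⨅ n, D n)) := tendsto_atTop_ciInf hDanti hDbdd
    have hL0 : (⨅ n, D n) = 0 := by
      have hge : 0 ≤ ⨅ n, D n := le_ciInf hDnn
      have hsub : Tendsto (fun m => D (m * s)) atTop (nhds (⨅ n, D n)) := by
        apply hL.comp
        apply tendsto_atTop_mono (fun m => Nat.le_mul_of_pos_right m (by omega)) tendsto_id
      have hgeo : Tendsto (fun m : ℕ => c ^ m * (F j 0 - G j 0)) atTop (nhds 0) := by
        have := (tendsto_pow_atTop_nhds_zero_of_lt_one hc0 hc1).mul_const (F j 0 - G j 0)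
        simpa using this
      have hle : (⨅ n, D n) ≤ 0 :=
        le_of_tendsto_of_tendsto' hsub hgeo (fun m => hdecay j m)
      linarith
    rw [hL0] at hL; exact hL
  have hGtend : ∀ j, Tendsto (G j) atTop (nhds (π j)) := by
    intro j
    have := (hFtend j).sub (hDtend j)
    simpa using this
  refine ⟨π, ?_, ?_, ?_⟩
  · intro j
    exact ge_of_tendsto' (hGtend j) fun n => Finset.le_inf' hne _ fun i _ => hn n i j
  · have hsum : Tendsto (fun n => ∑ j, (P ^ n) i0 j) atTop (nhds (∑ j, π j)) :=
      tendsto_finset_sum univ fun j _ =>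
        tendsto_of_tendsto_of_tendsto_of_le_of_le (hGtend j) (hFtend j)
          (fun n => hGle j n i0) (fun n => hleF j n i0)
    have hone : Tendsto (fun n : ℕ => ∑ j, (P ^ n) i0 j) atTop (nhds 1) := by
      simp only [hr]; exact tendsto_const_nhds
    exact tendsto_nhds_unique hsum hone
  · intro i j
    exact tendsto_of_tendsto_of_tendsto_of_le_of_le (hGtend j) (hFtend j)
      (fun n => hGle j n i) (fun n => hleF j n i)
end
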